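/- arXiv:2007.05698 — 3 statements merged into one kernel-verified Lean document; each statement's English description precedes it below -/
import Mathlib

section
/- Let ξ be a polynomial over ℂ with deg ξ ≤ 3, let s ∈ ℂ, and define ψ(z) = ξ(z)/(z - s). Then for all z, λ ∈ ℂ with z ≠ s and λ ≠ s, 2ψ(z) - 2ψ(λ) - (z - λ)·(ψ'(z) + ψ'(λ)) = ξ(s)·(z - λ)^3 / ((z - s)^2 (λ - s)^2). -/
/-!
Write `ξ = ξ(s) + (X - s) q` with `q = ξ /ₘ (X - s)` of degree at most two. Then
`ψ = ξ(s)/(z - s) + q` and `ψ' = -ξ(s)/(z - s)^2 + q'` away from `s`, and the left-hand side is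
additive in the pair `(ψ, ψ')`. It vanishes for `q` (the trapezoidal rule is exact on the linear
function `q'`), and a direct computation gives the right-hand side for the simple pole.
-/

open Polynomial

theorem Polynomial.trapezoid_defect_eq_zero_of_natDegree_le_two {R : Type*} [CommRing R]
    {q : R[X]} (hq : q.natDegree ≤ 2) (z w : R) :
    2 * q.eval z - 2 * q.eval w - (z - w) * (q.derivative.eval z + q.derivative.eval w) = 0 := by
  rw [q.as_sum_range' 3 (by omega)]
  simp only [Finset.sum_range_succ, Finset.range_one, Finset.sum_singleton, monomial_zero_left,
    eval_add, eval_C, eval_monomial, pow_one, derivative_add, derivative_C,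
    derivative_monomial_succ, Nat.cast_zero, zero_add, mul_one, Nat.cast_one]
  ring

theorem trapezoid_defect_const_div_sub {K : Type*} [Field K] (c : K) {s z w : K}
    (hz : z ≠ s) (hw : w ≠ s) :
    2 * (c / (z - s)) - 2 * (c / (w - s)) - (z - w) * (-c / (z - s) ^ 2 + -c / (w - s) ^ 2) =
      c * (z - w) ^ 3 / ((z - s) ^ 2 * (w - s) ^ 2) := by
  have hz' : z - s ≠ 0 := sub_ne_zero.mpr hz
  have hw' : w - s ≠ 0 := sub_ne_zero.mpr hw
  field_simp
  ring

namespace Polynomial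

variable {K : Type*} [Field K] (p : K[X]) {s x : K}

theorem eval_div_sub_eq (hx : x ≠ s) :
    p.eval x / (x - s) = p.eval s / (x - s) + (p /ₘ (X - C s)).eval x := by
  have h := congrArg (eval x) (X_sub_C_mul_divByMonic_eq_sub_modByMonic p s)
  simp only [modByMonic_X_sub_C_eq_C_eval, eval_mul, eval_sub, eval_X, eval_C] at h
  have hx' : x - s ≠ 0 := sub_ne_zero.mpr hx
  field_simp
  linear_combination -h

theorem derivative_eval_div_sub_sub_eval_div_sq_eq (hx : x ≠ s) :
    p.derivative.eval x / (x - s) - p.eval x / (x - s) ^ 2 =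
      -p.eval s / (x - s) ^ 2 + (p /ₘ (X - C s)).derivative.eval x := by
  have h := congrArg (eval x) (divByMonic_add_X_sub_C_mul_derivative_divByMonic_eq_derivative p s)
  simp only [eval_add, eval_mul, eval_sub, eval_X, eval_C] at h
  have hx' : x - s ≠ 0 := sub_ne_zero.mpr hx
  rw [← h, sq, ← div_div, ← sub_div, p.eval_div_sub_eq hx]
  field_simp
  ring

end Polynomial

/-- identity for ψ(z) = ξ(z)/(z-s), deg ξ ≤ 3. -/
theorem stmt_5 (ξ : Polynomial ℂ) (hξ : ξ.degree ≤ 3) (s z lam : ℂ)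
    (hzs : z ≠ s) (hls : lam ≠ s) :
    2 * (ξ.eval z / (z - s)) - 2 * (ξ.eval lam / (lam - s)) -
      (z - lam) * ((ξ.derivative.eval z / (z - s) - ξ.eval z / (z - s) ^ 2) +
        (ξ.derivative.eval lam / (lam - s) - ξ.eval lam / (lam - s) ^ 2)) =
    ξ.eval s * (z - lam) ^ 3 / ((z - s) ^ 2 * (lam - s) ^ 2) := by
  have hq : (ξ /ₘ (X - C s)).natDegree ≤ 2 := by
    rw [natDegree_divByMonic _ (monic_X_sub_C s), natDegree_X_sub_C]
    have := natDegree_le_of_degree_le (n := 3) hξ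
    omega
  rw [ξ.eval_div_sub_eq hzs, ξ.eval_div_sub_eq hls,
    ξ.derivative_eval_div_sub_sub_eval_div_sq_eq hzs,
    ξ.derivative_eval_div_sub_sub_eval_div_sq_eq hls]
  linear_combination trapezoid_defect_eq_zero_of_natDegree_le_two hq z lam +
    trapezoid_defect_const_div_sub (ξ.eval s) hzs hls
end

section
/- Let ρ be a polynomial of degree ≤ 2 over ℂ and τ, η rational functions with deg τ ≤ 2 and deg(σ·η) ≤ 4 where σ(z) = z·ρ(z). Under the substitution w = 1/z, the Heun class operator σ(z)∂_z² + τ(z)∂_z + η(z) transforms into w³ρ(1/w)∂_w² + w²(2ρ(1/w) - τ(1/w))∂_w + η(1/w), and the transformed coefficients σ̃(w) = w³ρ(1/w), τ̃(w) = w²(2ρ(1/w) - τ(1/w)), η̃(w) = η(1/w) again satisfy the Heun class conditions: σ̃ is a polynomial of degree ≤ 3, τ̃ a polynomial of degree ≤ 2, and σ̃·η̃ a rational function that is a polynomial of degree ≤ 4. -/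
/-!
Reflecting a polynomial of degree `≤ N` gives `w ^ N * p (1 / w)` as a polynomial of degree `≤ N`;
this produces `σ̃ = w³ρ(1/w)` from `deg ρ ≤ 2 ≤ 3`, `τ̃ = w²(2ρ - τ)(1/w)`, and
`σ̃ η̃ = w⁴ξ(1/w)`. For the operator, with `z = 1/w` the chain rule for `x ↦ u (1/x)` gives
`∂_w = -z² ∂_z` and `∂_w² = z⁴ ∂_z² + 2z³ ∂_z`, and the first-order terms `±2ρ ∂_z` cancel.
-/

open Filter Topology

namespace Polynomial

variable {K : Type*} [Field K]

theorem eval_reflect_of_ne_zero {p : K[X]} {N : ℕ} (hp : p.natDegree ≤ N) {w : K} (hw : w ≠ 0) :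
    (p.reflect N).eval w = w ^ N * p.eval w⁻¹ := by
  let : Invertible w⁻¹ := invertibleOfNonzero (inv_ne_zero hw)
  have h := eval₂_reflect_mul_pow (RingHom.id K) w⁻¹ N p hp
  rw [invOf_eq_inv, inv_inv] at h
  rw [eval, eval, ← h, mul_comm, inv_pow, inv_mul_cancel_right₀ (pow_ne_zero N hw)]

theorem exists_degree_le_eval_eq_pow_mul_eval_inv {p : K[X]} {N : ℕ} (hp : p.degree ≤ N) :
    ∃ q : K[X], q.degree ≤ N ∧ ∀ w : K, w ≠ 0 → q.eval w = w ^ N * p.eval w⁻¹ := by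
  have hp' : p.natDegree ≤ N := natDegree_le_iff_degree_le.2 hp
  exact ⟨p.reflect N, degree_le_of_natDegree_le (natDegree_reflect_le.trans (max_le le_rfl hp')),
    fun w hw => eval_reflect_of_ne_zero hp' hw⟩

end Polynomial

section InvSubstitution

variable {𝕜 F : Type*} [NontriviallyNormedField 𝕜] [NormedAddCommGroup F] [NormedSpace 𝕜 F]
  {u : 𝕜 → F} {w : 𝕜}

theorem HasDerivAt.comp_inv {u' : F} (hu : HasDerivAt u u' w⁻¹) (hw : w ≠ 0) :
    HasDerivAt (fun x => u x⁻¹) (-(w ^ 2)⁻¹ • u') w :=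
  hu.scomp w (hasDerivAt_inv hw)

theorem deriv_comp_inv (hu : DifferentiableAt 𝕜 u w⁻¹) (hw : w ≠ 0) :
    deriv (fun x => u x⁻¹) w = -(w ^ 2)⁻¹ • deriv u w⁻¹ :=
  (hu.hasDerivAt.comp_inv hw).deriv

theorem deriv_deriv_comp_inv (hu : ∀ᶠ z in 𝓝 w⁻¹, DifferentiableAt 𝕜 u z)
    (hu' : DifferentiableAt 𝕜 (deriv u) w⁻¹) (hw : w ≠ 0) :
    deriv (deriv fun x => u x⁻¹) w =
      (w ^ 4)⁻¹ • deriv (deriv u) w⁻¹ + (2 * (w ^ 3)⁻¹) • deriv u w⁻¹ := by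
  have h_eq : deriv (fun x => u x⁻¹) =ᶠ[𝓝 w] fun x => -(x ^ 2)⁻¹ • deriv u x⁻¹ := by
    filter_upwards [(continuousAt_inv₀ hw).eventually hu, eventually_ne_nhds hw] with x hux hx
    exact deriv_comp_inv hux hx
  have h_coeff : HasDerivAt (fun x : 𝕜 => -(x ^ 2)⁻¹) (2 * (w ^ 3)⁻¹) w :=
    ((hasDerivAt_pow 2 w).inv (pow_ne_zero 2 hw)).neg.congr_deriv (by field_simp; ring)
  rw [h_eq.deriv_eq]
  refine ((h_coeff.smul (hu'.hasDerivAt.comp_inv hw)).congr_deriv ?_).deriv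
  rw [smul_smul]
  congr 2
  ring

end InvSubstitution

open Polynomial

-- `η` is encoded as `ξ / σ` with `σ(z) = z ρ(z)` and `deg ξ ≤ 4`.
theorem stmt_7_general (ρ τ ξ : Polynomial ℂ)
    (hρ : ρ.degree ≤ 2) (hτ : τ.degree ≤ 2) (hξ : ξ.degree ≤ 4)
    (u : ℂ → ℂ) (hu : ∀ z : ℂ, z ≠ 0 → AnalyticAt ℂ u z) :
    (∃ σt : Polynomial ℂ, σt.degree ≤ 3 ∧
      ∀ w : ℂ, w ≠ 0 → σt.eval w = w ^ 3 * ρ.eval w⁻¹) ∧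
    (∃ τt : Polynomial ℂ, τt.degree ≤ 2 ∧
      ∀ w : ℂ, w ≠ 0 → τt.eval w = w ^ 2 * (2 * ρ.eval w⁻¹ - τ.eval w⁻¹)) ∧
    (∃ ξt : Polynomial ℂ, ξt.degree ≤ 4 ∧
      ∀ w : ℂ, w ≠ 0 → ρ.eval w⁻¹ ≠ 0 →
        ξt.eval w = (w ^ 3 * ρ.eval w⁻¹) *
          (ξ.eval w⁻¹ / (w⁻¹ * ρ.eval w⁻¹))) ∧
    (∀ w : ℂ, w ≠ 0 → w⁻¹ * ρ.eval w⁻¹ ≠ 0 →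
      (w⁻¹ * ρ.eval w⁻¹) * deriv (deriv u) w⁻¹ + τ.eval w⁻¹ * deriv u w⁻¹ +
        (ξ.eval w⁻¹ / (w⁻¹ * ρ.eval w⁻¹)) * u w⁻¹ =
      (w ^ 3 * ρ.eval w⁻¹) * deriv (deriv (fun x => u x⁻¹)) w +
        w ^ 2 * (2 * ρ.eval w⁻¹ - τ.eval w⁻¹) * deriv (fun x => u x⁻¹) w +
        (ξ.eval w⁻¹ / (w⁻¹ * ρ.eval w⁻¹)) * u w⁻¹) := by
  refine ⟨exists_degree_le_eval_eq_pow_mul_eval_inv (hρ.trans (by norm_num)), ?_, ?_, ?_⟩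
  · have h_deg : (2 • ρ - τ).degree ≤ 2 := by
      grw [degree_sub_le, degree_smul_le, hρ, hτ]
      simp
    obtain ⟨τt, hτt, hτt_eval⟩ := exists_degree_le_eval_eq_pow_mul_eval_inv (N := 2) h_deg
    exact ⟨τt, hτt, fun w hw => by simp [hτt_eval w hw]⟩
  · obtain ⟨ξt, hξt, hξt_eval⟩ := exists_degree_le_eval_eq_pow_mul_eval_inv (N := 4) hξ
    refine ⟨ξt, hξt, fun w hw hρw => ?_⟩
    rw [hξt_eval w hw]
    generalize ρ.eval w⁻¹ = P at hρw ⊢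
    field_simp
  · intro w hw _
    have hu_at := hu w⁻¹ (inv_ne_zero hw)
    rw [deriv_deriv_comp_inv (hu_at.eventually_analyticAt.mono fun _ h => h.differentiableAt)
        hu_at.deriv.differentiableAt hw, deriv_comp_inv hu_at.differentiableAt hw]
    simp only [smul_eq_mul]
    field_simp
    ring

/-- the Heun class is preserved by the substitution `w = 1/z`
which swaps a finite singularity with infinity.  Here `σ(z) = z·ρ(z)` with
`deg ρ ≤ 2`, `deg τ ≤ 2`, and `η = ξ/σ` with `deg ξ ≤ 4`.  The transformed
coefficients `σ̃(w) = w³ρ(1/w)`, `τ̃(w) = w²(2ρ(1/w) - τ(1/w))`,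
`η̃(w) = η(1/w)` again satisfy the Heun class conditions, and the operator
transforms as stated. -/
theorem stmt_7 (ρ τ ξ : Polynomial ℂ) (hρ0 : ρ ≠ 0)
    (hρ : ρ.degree ≤ 2) (hτ : τ.degree ≤ 2) (hξ : ξ.degree ≤ 4)
    (u : ℂ → ℂ) (hu : ∀ z : ℂ, z ≠ 0 → AnalyticAt ℂ u z) :
    (∃ σt : Polynomial ℂ, σt.degree ≤ 3 ∧
      ∀ w : ℂ, w ≠ 0 → σt.eval w = w ^ 3 * ρ.eval w⁻¹) ∧
    (∃ τt : Polynomial ℂ, τt.degree ≤ 2 ∧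
      ∀ w : ℂ, w ≠ 0 → τt.eval w = w ^ 2 * (2 * ρ.eval w⁻¹ - τ.eval w⁻¹)) ∧
    (∃ ξt : Polynomial ℂ, ξt.degree ≤ 4 ∧
      ∀ w : ℂ, w ≠ 0 → ρ.eval w⁻¹ ≠ 0 →
        ξt.eval w = (w ^ 3 * ρ.eval w⁻¹) *
          (ξ.eval w⁻¹ / (w⁻¹ * ρ.eval w⁻¹))) ∧
    (∀ w : ℂ, w ≠ 0 → w⁻¹ * ρ.eval w⁻¹ ≠ 0 →
      (w⁻¹ * ρ.eval w⁻¹) * deriv (deriv u) w⁻¹ + τ.eval w⁻¹ * deriv u w⁻¹ +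
        (ξ.eval w⁻¹ / (w⁻¹ * ρ.eval w⁻¹)) * u w⁻¹ =
      (w ^ 3 * ρ.eval w⁻¹) * deriv (deriv (fun x => u x⁻¹)) w +
        w ^ 2 * (2 * ρ.eval w⁻¹ - τ.eval w⁻¹) * deriv (fun x => u x⁻¹) w +
        (ξ.eval w⁻¹ / (w⁻¹ * ρ.eval w⁻¹)) * u w⁻¹) :=
  stmt_7_general ρ τ ξ hρ hτ hξ u hu
end

section
/- Generalized indicial identity at a grounded finite singularity: suppose an equation ∂_z² + p(z)∂_z + q(z) has rank-m singularity at 0 with integer m ≥ 2, p(z) = Σ_{j≥-m} p_j z^j with p_{-m} ≠ 0, q(z) = Σ_{j≥-l} q_j z^j with l ≤ m (grounded form). Then the recursion for a power series solution Σ v_k z^k gives, for each n ≥ 1, the leading relation 0 = n·p_{-m}·v_n + (terms involving v_0,…,v_{n-1}), so for any v₀ there is a unique formal power series solution with that constant term. -/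
open Finset in
/-- The coefficient sequence `v`, extended by `0` to negative indices. -/
noncomputable def laurentExt (v : ℕ → ℂ) : ℤ → ℂ :=
  fun k => if 0 ≤ k then v k.toNat else 0

open Finset in
/-- `IsFormalSolution m l p q v` says that `Σ_{k≥0} v_k z^k` is a formal power
series solution of `u'' + p u' + q u = 0`, i.e. for every `n ∈ ℤ` the
coefficient of `z^n` vanishes:
`(n+2)(n+1) v_{n+2} + Σ_{k=1}^{n+1+m} p_{n+1-k} k v_k + Σ_{k=0}^{n+l} q_{n-k} v_k = 0`. -/
def IsFormalSolution (m l : ℕ) (p q : ℤ → ℂ) (v : ℕ → ℂ) : Prop :=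
  ∀ n : ℤ,
    ((n : ℂ) + 2) * ((n : ℂ) + 1) * laurentExt v (n + 2) +
      (∑ k ∈ Finset.range (n + (m : ℤ) + 2).toNat,
        p (n + 1 - (k : ℤ)) * (k : ℂ) * v k) +
      (∑ k ∈ Finset.range (n + (l : ℤ) + 1).toNat,
        q (n - (k : ℤ)) * v k) = 0

/-!
In the coefficient of `z^(n-m-1)` the only occurrence of `v_k` with `k ≥ n` is the term
`n p_{-m} v_n` coming from `p u'`: the `u''` term only reaches `v_{n-m+1}` because `m ≥ 2`, and
`q u` only reaches `v_{n-m+l-1}` because `l ≤ m`. Since `n p_{-m} ≠ 0`, this equation determines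
`v_n` from `v_0, …, v_{n-1}`, while the coefficients of `z^N` with `N < -m` vanish identically;
so the solutions are exactly the sequences obeying a strong recursion.
-/

theorem existsUnique_eq_strongRecursion {α : Type*} (g : ∀ n : ℕ, (Fin n → α) → α) :
    ∃! v : ℕ → α, ∀ n, v n = g n (fun i => v i) := by
  refine ⟨Nat.strongRec fun n ih => g n fun i => ih i i.2, fun n => Nat.strongRec_eq _ n, ?_⟩
  intro v hv
  funext n
  induction n using Nat.strongRecOn with
  | ind n ih =>
    rw [hv, Nat.strongRec_eq]
    congr 1
    funext i
    exact ih i i.2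

noncomputable def extendByZero {α : Type*} [Zero α] {n : ℕ} (w : Fin n → α) : ℕ → α :=
  fun k => if h : k < n then w ⟨k, h⟩ else 0

noncomputable def formalCoeff (m l : ℕ) (p q : ℤ → ℂ) (v : ℕ → ℂ) (n : ℤ) : ℂ :=
  ((n : ℂ) + 2) * ((n : ℂ) + 1) * laurentExt v (n + 2) +
    (∑ k ∈ Finset.range (n + (m : ℤ) + 2).toNat, p (n + 1 - (k : ℤ)) * (k : ℂ) * v k) +
    (∑ k ∈ Finset.range (n + (l : ℤ) + 1).toNat, q (n - (k : ℤ)) * v k)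

/-- The terms of the coefficient of `z^(n-m-1)` involving only `v_0, …, v_{n-1}`. -/
noncomputable def indicialRemainder (m l : ℕ) (p q : ℤ → ℂ) (n : ℕ) (w : Fin n → ℂ) : ℂ :=
  formalCoeff m l p q (extendByZero w) ((n : ℤ) - m - 1)

noncomputable def solutionStep (m l : ℕ) (p q : ℤ → ℂ) (v₀ : ℂ) (n : ℕ) (w : Fin n → ℂ) : ℂ :=
  if n = 0 then v₀ else -indicialRemainder m l p q n w / ((n : ℂ) * p (-(m : ℤ)))

section

variable {m l : ℕ} {p q : ℤ → ℂ} {v : ℕ → ℂ}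

theorem formalCoeff_sub_sub_one (hm : 2 ≤ m) (hlm : l ≤ m) {n : ℕ} (hn : 1 ≤ n) :
    formalCoeff m l p q v ((n : ℤ) - m - 1) =
      (n : ℂ) * p (-(m : ℤ)) * v n + indicialRemainder m l p q n (fun i => v i) := by
  have hlaurent : laurentExt (extendByZero fun i : Fin n => v i) ((n : ℤ) - m - 1 + 2) =
      laurentExt v ((n : ℤ) - m - 1 + 2) := by
    by_cases h : (0 : ℤ) ≤ (n : ℤ) - m - 1 + 2
    · have hlt : ((n : ℤ) - m - 1 + 2).toNat < n := by omega
      simp [laurentExt, extendByZero, h, hlt]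
    · simp [laurentExt, h]
  have hq : ∑ k ∈ Finset.range ((n : ℤ) - m - 1 + l + 1).toNat,
        q ((n : ℤ) - m - 1 - k) * extendByZero (fun i : Fin n => v i) k =
      ∑ k ∈ Finset.range ((n : ℤ) - m - 1 + l + 1).toNat, q ((n : ℤ) - m - 1 - k) * v k := by
    refine Finset.sum_congr rfl fun k hk => ?_
    have : k < n := by have := Finset.mem_range.mp hk; omega
    simp [extendByZero, this]
  have hp : ∑ k ∈ Finset.range n,
        p ((n : ℤ) - m - 1 + 1 - k) * (k : ℂ) * extendByZero (fun i : Fin n => v i) k =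
      ∑ k ∈ Finset.range n, p ((n : ℤ) - m - 1 + 1 - k) * (k : ℂ) * v k :=
    Finset.sum_congr rfl fun k hk => by simp [extendByZero, Finset.mem_range.mp hk]
  have hrange : ((n : ℤ) - m - 1 + m + 2).toNat = n + 1 := by omega
  have hlead : (n : ℤ) - m - 1 + 1 - n = -(m : ℤ) := by ring
  simp only [indicialRemainder, formalCoeff, hrange, hlaurent, hq, Finset.sum_range_succ, hp,
    hlead]
  simp only [extendByZero, lt_irrefl, dite_false]
  ring

theorem formalCoeff_of_lt (hm : 2 ≤ m) (hlm : l ≤ m) {N : ℤ} (hN : N < -(m : ℤ)) :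
    formalCoeff m l p q v N = 0 := by
  have hlaurent : laurentExt v (N + 2) = 0 := if_neg (by omega)
  have hp : ∑ k ∈ Finset.range (N + m + 2).toNat, p (N + 1 - (k : ℤ)) * (k : ℂ) * v k = 0 :=
    Finset.sum_eq_zero fun k hk => by
      obtain rfl : k = 0 := by have := Finset.mem_range.mp hk; omega
      simp
  have hq : (N + (l : ℤ) + 1).toNat = 0 := by omega
  simp [formalCoeff, hlaurent, hp, hq]

theorem isFormalSolution_iff (hm : 2 ≤ m) (hlm : l ≤ m) :
    IsFormalSolution m l p q v ↔ ∀ n : ℕ, 1 ≤ n →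
      (n : ℂ) * p (-(m : ℤ)) * v n + indicialRemainder m l p q n (fun i => v i) = 0 := by
  constructor
  · intro hv n hn
    rw [← formalCoeff_sub_sub_one hm hlm hn]
    exact hv _
  · intro h N
    show formalCoeff m l p q v N = 0
    rcases lt_or_ge N (-(m : ℤ)) with hN | hN
    · exact formalCoeff_of_lt hm hlm hN
    · obtain ⟨n, hn, rfl⟩ : ∃ n : ℕ, 1 ≤ n ∧ N = (n : ℤ) - m - 1 :=
        ⟨(N + m + 1).toNat, by omega, by omega⟩
      rw [formalCoeff_sub_sub_one hm hlm hn]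
      exact h n hn

theorem eq_and_isFormalSolution_iff (hm : 2 ≤ m) (hlm : l ≤ m)
    (hpm : p (-(m : ℤ)) ≠ 0) (v₀ : ℂ) :
    (v 0 = v₀ ∧ IsFormalSolution m l p q v) ↔
      ∀ n, v n = solutionStep m l p q v₀ n (fun i => v i) := by
  have hstep : ∀ n : ℕ, 1 ≤ n → (v n = solutionStep m l p q v₀ n (fun i => v i) ↔
      (n : ℂ) * p (-(m : ℤ)) * v n + indicialRemainder m l p q n (fun i => v i) = 0) := by
    intro n hn
    have hne : (n : ℂ) * p (-(m : ℤ)) ≠ 0 := mul_ne_zero (Nat.cast_ne_zero.mpr (by omega)) hpm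
    rw [solutionStep, if_neg (by omega), eq_div_iff hne]
    constructor <;> intro h <;> linear_combination h
  rw [isFormalSolution_iff hm hlm]
  constructor
  · rintro ⟨h0, hsol⟩ (_ | n)
    · simpa [solutionStep] using h0
    · exact (hstep _ (by omega)).2 (hsol _ (by omega))
  · intro h
    exact ⟨by simpa [solutionStep] using h 0, fun n hn => (hstep n hn).1 (h n)⟩

end

theorem stmt_19_general (m l : ℕ) (hm : 2 ≤ m) (hlm : l ≤ m) (p q : ℤ → ℂ)
    (hpm : p (-(m : ℤ)) ≠ 0) :
    (∃ F : (n : ℕ) → (Fin n → ℂ) → ℂ,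
      ∀ v : ℕ → ℂ, IsFormalSolution m l p q v →
        ∀ n : ℕ, 1 ≤ n →
          (n : ℂ) * p (-(m : ℤ)) * v n + F n (fun i => v i) = 0) ∧
    (∀ v₀ : ℂ, ∃! v : ℕ → ℂ, v 0 = v₀ ∧ IsFormalSolution m l p q v) := by
  refine ⟨⟨indicialRemainder m l p q, fun v hv => (isFormalSolution_iff hm hlm).1 hv⟩,
    fun v₀ => ?_⟩
  simpa only [eq_and_isFormalSolution_iff hm hlm hpm v₀] using
    existsUnique_eq_strongRecursion (solutionStep m l p q v₀)

/-- at a grounded rank-`m` singularity (`m ≥ 2`, `p_{-m} ≠ 0`,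
`l ≤ m`), the recursion for a power series solution reads, for each `n ≥ 1`,
`0 = n p_{-m} v_n + (terms involving v_0,…,v_{n-1})`; consequently for every
`v₀` there is a unique formal power series solution with constant term `v₀`. -/
theorem stmt_19 (m l : ℕ) (hm : 2 ≤ m) (hlm : l ≤ m) (p q : ℤ → ℂ)
    (hpm : p (-(m : ℤ)) ≠ 0)
    (hp : ∀ j : ℤ, j < -(m : ℤ) → p j = 0)
    (hq : ∀ j : ℤ, j < -(l : ℤ) → q j = 0) :
    (∃ F : (n : ℕ) → (Fin n → ℂ) → ℂ,
      ∀ v : ℕ → ℂ, IsFormalSolution m l p q v →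
        ∀ n : ℕ, 1 ≤ n →
          (n : ℂ) * p (-(m : ℤ)) * v n + F n (fun i => v i) = 0) ∧
    (∀ v₀ : ℂ, ∃! v : ℕ → ℂ, v 0 = v₀ ∧ IsFormalSolution m l p q v) :=
  stmt_19_general m l hm hlm p q hpm
end
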